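/- (Refined forward Lipschitz estimate depending on the number of shocks, proved inside Lemma B.5.) Let the model data satisfy the Lipschitz assumptions, let v, v̄ ∈ V, and let μ, μ̄ be the unique solutions of (E2), (E4) and (E5) given v and v̄ respectively. Then for every (t,u) ∈ TS, ‖μ(t,u) − μ̄(t,u)‖ ≤ L_Q̂ · T · ( Σ_{i=0}^{Z(u)} ( exp((Qmax + L_Q̂)·T) )^{i+1} · Jmax^i ) · sup_{(s,w)∈TS} ‖v(s,w) − v̄(s,w)‖. -/

import Mathlib

open MeasureTheory
open scoped BigOperators Classical

namespace MFGShocks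

/-- The probability simplex `𝒫(𝕊)` in `ℝ^S`. -/
def simplex (S : ℕ) : Set (Fin S → ℝ) :=
  {m | (∀ i, 0 ≤ m i) ∧ ∑ i, m i = 1}

/-- Membership in the parameter set `𝕌`: for some `k ≤ n`, the first `k` coordinates are
increasing and lie in `[0,T]` and the remaining coordinates equal `-1`. -/
def memU (n : ℕ) (T : ℝ) (u : Fin n → ℝ) : Prop :=
  ∃ k ≤ n, (∀ i : Fin n, (i : ℕ) < k → u i ∈ Set.Icc (0 : ℝ) T) ∧
    (∀ i j : Fin n, (j : ℕ) < k → i ≤ j → u i ≤ u j) ∧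
    (∀ i : Fin n, k ≤ (i : ℕ) → u i = -1)

/-- `Z(u)`: the number of coordinates of `u` different from `-1`, i.e.\ the number of
shocks recorded in `u`. -/
noncomputable def Zu {n : ℕ} (u : Fin n → ℝ) : ℕ :=
  (Finset.univ.filter fun i => u i ≠ -1).card

/-- Membership `(t,u) ∈ TS`. -/
def memTS (n : ℕ) (T : ℝ) (t : ℝ) (u : Fin n → ℝ) : Prop :=
  memU n T u ∧ t ∈ Set.Icc (0 : ℝ) T ∧ ∀ i, u i ≤ t

/-- `→(u,t)`: record a new shock at time `t` (replace coordinate `Z(u)+1` of `u` by `t`). -/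
noncomputable def push {n : ℕ} (u : Fin n → ℝ) (t : ℝ) : Fin n → ℝ :=
  fun i => if (i : ℕ) = Zu u then t else u i

/-- `←u`: delete the last shock (replace coordinate `Z(u)` of `u` by `-1`). -/
noncomputable def pop {n : ℕ} (u : Fin n → ℝ) : Fin n → ℝ :=
  fun i => if (i : ℕ) + 1 = Zu u then -1 else u i

/-- `t_u = u^{Z(u)}`: the time of the last shock recorded in `u` (`0` if there is none). -/
noncomputable def lastTime {n : ℕ} (u : Fin n → ℝ) : ℝ :=
  if h : Zu u - 1 < n then u ⟨Zu u - 1, h⟩ else 0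

/-- The left endpoint of the time interval associated with the parameter `u`:
`t_u` if `u` records at least one shock, and `0` otherwise. -/
noncomputable def startTime {n : ℕ} (u : Fin n → ℝ) : ℝ :=
  if Zu u = 0 then 0 else lastTime u

/-- `f` is absolutely continuous on the interval `[a,b]`. -/
def AbsContOn {E : Type*} [NormedAddCommGroup E] (f : ℝ → E) (a b : ℝ) : Prop :=
  ∀ ε > (0 : ℝ), ∃ δ > (0 : ℝ), ∀ (N : ℕ) (c d : Fin N → ℝ),
    (∀ k, a ≤ c k ∧ c k ≤ d k ∧ d k ≤ b) →
    (∀ k l, k ≠ l → Set.Ioo (c k) (d k) ∩ Set.Ioo (c l) (d l) = ∅) →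
    ∑ k, (d k - c k) < δ → ∑ k, ‖f (d k) - f (c k)‖ < ε

/-- A function `f : TS → ℝ^S` is regular if `f(·,u)` is absolutely continuous on
`[max_k u^k, T]` (intersected with `[0,T]`) for every `u ∈ 𝕌`. -/
def Regular (S n : ℕ) (T : ℝ) (f : ℝ → (Fin n → ℝ) → Fin S → ℝ) : Prop :=
  ∀ u : Fin n → ℝ, memU n T u → AbsContOn (fun t => f t u) (startTime u) T

/-- The model data: reduced-form running reward `ψ̂`, reduced-form intensity matrix `Q̂`,
shock intensities `λ`, terminal reward `Ψ`, relocation map `J` (independent of the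
distribution) and initial distribution `m₀`. -/
structure Model (S n : ℕ) where
  psi : ℝ → (Fin n → ℝ) → (Fin S → ℝ) → (Fin S → ℝ) → Fin S → ℝ
  Q : ℝ → (Fin n → ℝ) → (Fin S → ℝ) → (Fin S → ℝ) → Fin S → Fin S → ℝ
  lam : ℕ → ℝ → (Fin S → ℝ) → ℝ
  Psi : ℕ → (Fin S → ℝ) → Fin S → ℝ
  J : ℝ → Fin S → Fin S
  m0 : Fin S → ℝ

/-- The standing (boundedness, measurability, intensity-matrix and Lipschitz) assumptions on
the model data, together with the constants `Ψmax, ψmax, Qmax, λmax, Jmax` bounding the data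
and the Lipschitz constants `L_ψ̂, L_Q̂, L_Ψ, L_λ`.  Throughout, `ℝ^S` carries the maximum
norm and the matrix norm is the compatible induced one (maximal absolute row sum). -/
structure Hyps (S n : ℕ) (T : ℝ) (D : Model S n)
    (Lpsi LQ LPsi Llam Psimax psimax Qmax lammax : ℝ) (Jmax : ℕ) : Prop where
  hS : 1 ≤ S
  hn : 1 ≤ n
  hT : 0 < T
  hm0 : D.m0 ∈ simplex S
  hLpsi : 0 < Lpsi
  hLQ : 0 < LQ
  hLPsi : 0 < LPsi
  hLlam : 0 < Llam
  psi_meas : Measurable fun p : ℝ × (Fin n → ℝ) × (Fin S → ℝ) × (Fin S → ℝ) =>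
    D.psi p.1 p.2.1 p.2.2.1 p.2.2.2
  Q_meas : Measurable fun p : ℝ × (Fin n → ℝ) × (Fin S → ℝ) × (Fin S → ℝ) =>
    D.Q p.1 p.2.1 p.2.2.1 p.2.2.2
  lam_meas : ∀ k, Measurable fun p : ℝ × (Fin S → ℝ) => D.lam k p.1 p.2
  Psi_meas : ∀ k, Measurable (D.Psi k)
  J_meas : Measurable D.J
  psi_bdd : ∀ t u m v, memTS n T t u → m ∈ simplex S → ∀ i, |D.psi t u m v i| ≤ psimax
  Q_bdd : ∀ t u m v, memTS n T t u → m ∈ simplex S → ∀ i, ∑ j, |D.Q t u m v i j| ≤ Qmax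
  Q_offdiag : ∀ t u m v i j, i ≠ j → 0 ≤ D.Q t u m v i j
  Q_rowsum : ∀ t u m v i, ∑ j, D.Q t u m v i j = 0
  lam_pos : ∀ k, 1 ≤ k → k ≤ n → ∀ t ∈ Set.Icc (0 : ℝ) T, ∀ m ∈ simplex S,
    0 < D.lam k t m
  lam_bdd : ∀ k, 1 ≤ k → k ≤ n → ∀ t ∈ Set.Icc (0 : ℝ) T, ∀ m ∈ simplex S,
    D.lam k t m ≤ lammax
  Psi_bdd : ∀ k ≤ n, ∀ m ∈ simplex S, ∀ i, |D.Psi k m i| ≤ Psimax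
  psi_lip : ∀ t u, memTS n T t u → ∀ m₁ ∈ simplex S, ∀ m₂ ∈ simplex S,
    ∀ v₁ v₂ : Fin S → ℝ, ∀ i,
      |D.psi t u m₁ v₁ i - D.psi t u m₂ v₂ i| ≤ Lpsi * (‖m₁ - m₂‖ + ‖v₁ - v₂‖)
  Q_lip : ∀ t u, memTS n T t u → ∀ m₁ ∈ simplex S, ∀ m₂ ∈ simplex S,
    ∀ v₁ v₂ : Fin S → ℝ, ∀ i,
      ∑ j, |D.Q t u m₁ v₁ i j - D.Q t u m₂ v₂ i j| ≤ LQ * (‖m₁ - m₂‖ + ‖v₁ - v₂‖)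
  Psi_lip : ∀ k ≤ n, ∀ m₁ ∈ simplex S, ∀ m₂ ∈ simplex S,
    ‖D.Psi k m₁ - D.Psi k m₂‖ ≤ LPsi * ‖m₁ - m₂‖
  lam_lip : ∀ k, 1 ≤ k → k ≤ n → ∀ t ∈ Set.Icc (0 : ℝ) T, ∀ m₁ ∈ simplex S, ∀ m₂ ∈ simplex S,
    |D.lam k t m₁ - D.lam k t m₂| ≤ Llam * ‖m₁ - m₂‖
  J_bdd : ∀ t ∈ Set.Icc (0 : ℝ) T, ∀ j : Fin S,
    (Finset.univ.filter fun i => D.J t i = j).card ≤ Jmax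

/-- The constant `v_max`. -/
noncomputable def vmaxC (n : ℕ) (T Psimax psimax Qmax lammax : ℝ) : ℝ :=
  (Psimax + psimax * T) * Real.exp ((Qmax + lammax) * T) *
    ∑ i ∈ Finset.range (n + 1), (Real.exp ((Qmax + lammax) * T) * lammax * T) ^ i

/-- The constant `K₁ = L_ψ̂ + L_Q̂ v_max + 2 v_max L_λ`. -/
noncomputable def K1C (n : ℕ) (T Lpsi LQ Llam Psimax psimax Qmax lammax : ℝ) : ℝ :=
  Lpsi + LQ * vmaxC n T Psimax psimax Qmax lammax +
    2 * vmaxC n T Psimax psimax Qmax lammax * Llam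

/-- The constant `K₂ = L_ψ̂ + v_max L_Q̂ + Qmax + λmax`. -/
noncomputable def K2C (n : ℕ) (T Lpsi LQ Psimax psimax Qmax lammax : ℝ) : ℝ :=
  Lpsi + vmaxC n T Psimax psimax Qmax lammax * LQ + Qmax + lammax

/-- The right-hand side of the backward equation (E1), written for the integral
(Carathéodory) formulation `v(t,u) = Ψ(Z(u),μ(T,u)) + ∫_t^T (E1rhs)(s) ds`. -/
noncomputable def E1rhs {S n : ℕ} (D : Model S n)
    (μ v : ℝ → (Fin n → ℝ) → Fin S → ℝ) (u : Fin n → ℝ) (i : Fin S) (s : ℝ) : ℝ :=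
  D.psi s u (μ s u) (v s u) i + (∑ j, D.Q s u (μ s u) (v s u) i j * v s u j) +
    (if Zu u < n then
      D.lam (Zu u + 1) s (μ s u) * (v s (push u s) (D.J s i) - v s u i)
    else 0)

/-- `v` is a (Carathéodory) solution of the backward equation (E1) with terminal
condition (E3), given the flow `μ`. -/
def SolBackward (S n : ℕ) (T : ℝ) (D : Model S n)
    (μ v : ℝ → (Fin n → ℝ) → Fin S → ℝ) : Prop :=
  ∀ u : Fin n → ℝ, memU n T u →
    (∀ i : Fin S, v T u i = D.Psi (Zu u) (μ T u) i) ∧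
    ∀ t : ℝ, memTS n T t u → ∀ i : Fin S,
      IntervalIntegrable (E1rhs D μ v u i) volume t T ∧
      v t u i = D.Psi (Zu u) (μ T u) i + ∫ s in t..T, E1rhs D μ v u i s

/-- The right-hand side of the forward equation (E2). -/
noncomputable def E2rhs {S n : ℕ} (D : Model S n)
    (v μ : ℝ → (Fin n → ℝ) → Fin S → ℝ) (u : Fin n → ℝ) (i : Fin S) (s : ℝ) : ℝ :=
  ∑ j, μ s u j * D.Q s u (μ s u) (v s u) j i

/-- `μ` is a (Carathéodory) solution of the forward equation (E2) with initial
condition (E4) and consistency conditions (E5), given the value function `v`. -/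
def SolForward (S n : ℕ) (T : ℝ) (D : Model S n)
    (v μ : ℝ → (Fin n → ℝ) → Fin S → ℝ) : Prop :=
  (∀ i, μ 0 (fun _ => (-1 : ℝ)) i = D.m0 i) ∧
  (∀ u : Fin n → ℝ, memU n T u → 1 ≤ Zu u → ∀ j : Fin S,
    μ (lastTime u) u j =
      ∑ i, if D.J (lastTime u) i = j then μ (lastTime u) (pop u) i else 0) ∧
  (∀ u : Fin n → ℝ, memU n T u → ∀ t : ℝ, memTS n T t u → ∀ i : Fin S,
    IntervalIntegrable (E2rhs D v μ u i) volume (startTime u) t ∧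
    μ t u i = μ (startTime u) u i + ∫ s in (startTime u)..t, E2rhs D v μ u i s)

/-- Membership in `M`: a `𝒫(𝕊)`-valued function on `TS` that is `Qmax`-Lipschitz in time. -/
def MemM (S n : ℕ) (T Qmax : ℝ) (μ : ℝ → (Fin n → ℝ) → Fin S → ℝ) : Prop :=
  (∀ t u, memTS n T t u → μ t u ∈ simplex S) ∧
  ∀ u : Fin n → ℝ, memU n T u → ∀ t₁ t₂ : ℝ, memTS n T t₁ u → memTS n T t₂ u →
    ‖μ t₁ u - μ t₂ u‖ ≤ Qmax * |t₁ - t₂|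

/-- Membership in `V`: a regular function on `TS` bounded by `v_max` in supremum norm. -/
def MemV (S n : ℕ) (T vmaxVal : ℝ) (v : ℝ → (Fin n → ℝ) → Fin S → ℝ) : Prop :=
  Regular S n T v ∧ ∀ t u, memTS n T t u → ‖v t u‖ ≤ vmaxVal

/-- The supremum norm over `TS` of a function `f : TS → ℝ^S`. -/
noncomputable def supTS (S n : ℕ) (T : ℝ) (f : ℝ → (Fin n → ℝ) → Fin S → ℝ) : ℝ :=
  sSup {r : ℝ | ∃ t u, memTS n T t u ∧ r = ‖f t u‖}

end MFGShocks

/-!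
Work with the `ℓ¹` distance `δ(t,u) = ∑ᵢ |μⁱ(t,u) - μ̄ⁱ(t,u)|`, which dominates the sup norm.
Solutions of (E2) stay in the simplex, because the flux of an intensity matrix into the negative
coordinates is nonnegative. Hence between two shocks the `ℓ¹` distance of the right-hand sides of
(E2) is at most `(Qmax + L_Q̂) δ + L_Q̂ Δ` with `Δ = sup ‖v - v̄‖`, and Grönwall's inequality gives
`δ(t,u) ≤ (δ(t_u,u) + L_Q̂ Δ (t - t_u)) e^{(Qmax + L_Q̂)(t - t_u)}`. The relocation (E5) does not
increase the `ℓ¹` distance, so induction on `Z(u)` yields `δ(t,u) ≤ L_Q̂ Δ t e^{(Qmax + L_Q̂) t}`: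
the term `i = 0` of the claimed bound already suffices.
-/

open Set Filter Topology

theorem LipschitzWith.comp_absolutelyContinuousOnInterval {X Y : Type*} [PseudoMetricSpace X]
    [PseudoMetricSpace Y] {g : X → Y} {K : NNReal} (hg : LipschitzWith K g) {f : ℝ → X}
    {a b : ℝ} (hf : AbsolutelyContinuousOnInterval f a b) :
    AbsolutelyContinuousOnInterval (g ∘ f) a b := by
  unfold AbsolutelyContinuousOnInterval at hf ⊢
  refine squeeze_zero (fun _ => Finset.sum_nonneg fun _ _ => dist_nonneg) (fun E => ?_)
    (by simpa using hf.const_mul (K : ℝ))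
  rw [Finset.mul_sum]
  exact Finset.sum_le_sum fun i _ => hg.dist_le_mul _ _

theorem deriv_min_zero_of_hasDerivAt {F : ℝ → ℝ} {F' t : ℝ} (hF : HasDerivAt F F' t) :
    deriv (fun s => min (F s) 0) t = if F t < 0 then F' else 0 := by
  rcases lt_trichotomy (F t) 0 with hneg | hzero | hpos
  · rw [if_pos hneg]
    refine (hF.congr_of_eventuallyEq ?_).deriv
    filter_upwards [hF.continuousAt.eventually_lt continuousAt_const hneg] with s hs
    exact min_eq_left hs.le
  · rw [if_neg hzero.not_lt]
    -- `t` is a maximum of `min (F ·) 0`, so the derivative vanishes even if it does not exist.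
    refine IsLocalMax.deriv_eq_zero (Eventually.of_forall fun s => ?_)
    simp [hzero]
  · rw [if_neg (not_lt.mpr hpos.le)]
    have hzero_near : (fun s => min (F s) 0) =ᶠ[𝓝 t] fun _ => 0 := by
      filter_upwards [continuousAt_const.eventually_lt hF.continuousAt hpos] with s hs
      exact min_eq_right hs.le
    rw [hzero_near.deriv_eq, deriv_const]

namespace MFGShocks

section Analysis

variable {ι : Type*} [Fintype ι]

theorem nonneg_of_sum_rate_over_negative_nonneg {a b : ℝ} (hab : a ≤ b) {f : ℝ → ι → ℝ}
    {ρ : ι → ℝ → ℝ} (hρ : ∀ i, IntervalIntegrable (ρ i) volume a b)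
    (hf : ∀ t ∈ Icc a b, ∀ i, f t i = f a i + ∫ s in a..t, ρ i s) (ha : ∀ i, 0 ≤ f a i)
    (hrate : ∀ t ∈ Icc a b, 0 ≤ ∑ i with f t i < 0, ρ i t) :
    ∀ i, 0 ≤ f b i := by
  -- `∑ᵢ min (fᵢ, 0)` is absolutely continuous with a.e. derivative `∑_{fᵢ < 0} ρᵢ ≥ 0`.
  set G : ι → ℝ → ℝ := fun i t => min (f a i + ∫ s in a..t, ρ i s) 0
  have hmin : ∀ c : ℝ, LipschitzWith 1 fun x : ℝ => min (c + x) 0 := fun c =>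
    LipschitzWith.of_dist_le_mul fun x y => by
      simpa [Real.dist_eq] using abs_min_sub_min_le_max (c + x) 0 (c + y) 0
  have hGac : ∀ i, AbsolutelyContinuousOnInterval (G i) a b := fun i =>
    (hmin (f a i)).comp_absolutelyContinuousOnInterval
      ((hρ i).absolutelyContinuousOnInterval_intervalIntegral left_mem_uIcc)
  have hGderiv : ∀ᵐ t, t ∈ Icc a b → ∀ i, deriv (G i) t = if f t i < 0 then ρ i t else 0 := by
    rw [← uIcc_of_le hab]
    filter_upwards [ae_all_iff.mpr fun i => (hρ i).ae_hasDerivAt_integral] with t ht htI i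
    rw [hf t (uIcc_of_le hab ▸ htI) i]
    exact deriv_min_zero_of_hasDerivAt ((ht i htI a left_mem_uIcc).const_add _)
  have hGa : ∀ i, G i a = 0 := fun i => by simp [G, ha i]
  have hGb : 0 ≤ ∑ i, G i b := by
    have hFTC : ∑ i, G i b = ∫ t in a..b, ∑ i, deriv (G i) t := by
      rw [intervalIntegral.integral_finsetSum fun i _ => (hGac i).intervalIntegrable_deriv]
      simp [(hGac _).integral_deriv_eq_sub, hGa]
    rw [hFTC]
    refine intervalIntegral.integral_nonneg_of_ae_restrict hab ?_
    filter_upwards [(ae_restrict_iff' measurableSet_Icc).mpr hGderiv,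
      ae_restrict_mem measurableSet_Icc] with t ht htI
    rw [Pi.zero_apply, Finset.sum_congr rfl fun i _ => ht i, ← Finset.sum_filter]
    exact hrate t htI
  have hGnonpos : ∀ i, G i b ≤ 0 := fun i => min_le_right _ _
  intro i
  have hGi : G i b = 0 :=
    (Finset.sum_eq_zero_iff_of_nonpos fun j _ => hGnonpos j).mp
      (le_antisymm (Finset.sum_nonpos fun j _ => hGnonpos j) hGb) i (Finset.mem_univ i)
  rw [hf b (right_mem_Icc.mpr hab)]
  exact min_eq_right_iff.mp hGi

theorem add_integral_le_gronwall {a b A B c₀ : ℝ} (hab : a ≤ b) (hA : 0 ≤ A) (hB : 0 ≤ B)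
    {r : ℝ → ℝ} (hr : IntervalIntegrable r volume a b)
    (hbound : ∀ s ∈ Icc a b, r s ≤ A * (c₀ + ∫ x in a..s, r x) + B) :
    c₀ + ∫ x in a..b, r x ≤ (c₀ + B * (b - a)) * Real.exp (A * (b - a)) := by
  set R : ℝ → ℝ := fun s => ∫ x in a..s, r x
  set E : ℝ → ℝ := fun s => Real.exp (-A * (s - a))
  -- `B (s - a) - (c₀ + R s) e^{-A (s - a)}` is absolutely continuous and nondecreasing.
  set φ : ℝ → ℝ := fun s => B * (s - a) - c₀ * E s - R s * E s
  have hEsmooth : ContDiff ℝ 1 E := by fun_prop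
  have hφac : AbsolutelyContinuousOnInterval φ a b :=
    (ContDiffOn.absolutelyContinuousOnInterval (by fun_prop)).sub
      ((hr.absolutelyContinuousOnInterval_intervalIntegral left_mem_uIcc).mul
        hEsmooth.contDiffOn.absolutelyContinuousOnInterval)
  have hφderiv : ∀ᵐ s, s ∈ Icc a b → 0 ≤ deriv φ s := by
    rw [← uIcc_of_le hab]
    filter_upwards [hr.ae_hasDerivAt_integral] with s hR hs
    have hE : HasDerivAt E (-A * E s) s := by
      simpa [E, mul_comm] using ((hasDerivAt_id s).sub_const a).const_mul (-A) |>.exp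
    have hφ : HasDerivAt φ (B - c₀ * (-A * E s) - (r s * E s + R s * (-A * E s))) s :=
      ((((hasDerivAt_id s).sub_const a).const_mul B).sub (hE.const_mul c₀)).sub
        ((hR hs a left_mem_uIcc).mul hE) |>.congr_deriv (by ring)
    rw [uIcc_of_le hab] at hs
    have hEpos : 0 < E s := Real.exp_pos _
    have hEle : E s ≤ 1 := Real.exp_le_one_iff.mpr (by nlinarith [hs.1])
    rw [hφ.deriv]
    nlinarith [hbound s hs]
  have hmono : φ a ≤ φ b := by
    rw [← sub_nonneg, ← hφac.integral_deriv_eq_sub]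
    exact intervalIntegral.integral_nonneg_of_ae_restrict hab
      ((ae_restrict_iff' measurableSet_Icc).mpr hφderiv)
  have hEa : E a = 1 := by simp [E]
  have hEb : E b * Real.exp (A * (b - a)) = 1 := by
    rw [← Real.exp_add]; simp
  have hdecay : (c₀ + R b) * E b ≤ c₀ + B * (b - a) := by
    simp only [φ, hEa, R, intervalIntegral.integral_same] at hmono
    linarith
  calc c₀ + R b = (c₀ + R b) * E b * Real.exp (A * (b - a)) := by rw [mul_assoc, hEb, mul_one]
    _ ≤ _ := mul_le_mul_of_nonneg_right hdecay (Real.exp_pos _).le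

theorem sum_abs_sub_le_add_integral {a s : ℝ} (has : a ≤ s) {f g : ℝ → ι → ℝ}
    {ρ σ : ι → ℝ → ℝ} (hρ : ∀ i, IntervalIntegrable (ρ i) volume a s)
    (hσ : ∀ i, IntervalIntegrable (σ i) volume a s)
    (hf : ∀ i, f s i = f a i + ∫ x in a..s, ρ i x) (hg : ∀ i, g s i = g a i + ∫ x in a..s, σ i x) :
    ∑ i, |f s i - g s i| ≤ ∑ i, |f a i - g a i| + ∫ x in a..s, ∑ i, |ρ i x - σ i x| := by
  rw [intervalIntegral.integral_finsetSum fun i _ => ((hρ i).sub (hσ i)).abs,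
    ← Finset.sum_add_distrib]
  refine Finset.sum_le_sum fun i _ => ?_
  have hdiff : f s i - g s i = (f a i - g a i) + ∫ x in a..s, (ρ i x - σ i x) := by
    rw [intervalIntegral.integral_sub (hρ i) (hσ i), hf, hg]
    ring
  rw [hdiff]
  exact (abs_add_le _ _).trans
    (add_le_add_right (intervalIntegral.abs_integral_le_integral_abs has) _)

theorem add_mul_exp_le_mul_exp {A B a t c : ℝ} (hA : 0 ≤ A) (hB : 0 ≤ B) (ha : 0 ≤ a)
    (hat : a ≤ t) (hc : c ≤ B * (a * Real.exp (A * a))) :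
    (c + B * (t - a)) * Real.exp (A * (t - a)) ≤ B * (t * Real.exp (A * t)) := by
  have hsplit : Real.exp (A * a) * Real.exp (A * (t - a)) = Real.exp (A * t) := by
    rw [← Real.exp_add]; ring_nf
  have hgrow : Real.exp (A * (t - a)) ≤ Real.exp (A * t) :=
    Real.exp_le_exp.mpr (by nlinarith)
  calc (c + B * (t - a)) * Real.exp (A * (t - a))
      = c * Real.exp (A * (t - a)) + B * (t - a) * Real.exp (A * (t - a)) := by ring
    _ ≤ B * (a * Real.exp (A * a)) * Real.exp (A * (t - a)) + B * (t - a) * Real.exp (A * t) :=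
        add_le_add (mul_le_mul_of_nonneg_right hc (Real.exp_pos _).le)
          (mul_le_mul_of_nonneg_left hgrow (mul_nonneg hB (sub_nonneg.mpr hat)))
    _ = B * (t * Real.exp (A * t)) := by rw [mul_assoc B, mul_assoc a, hsplit]; ring

end Analysis

section FiniteSums

variable {ι κ : Type*} [Fintype ι] [Fintype κ]

theorem norm_le_sum_abs (x : ι → ℝ) : ‖x‖ ≤ ∑ i, |x i| :=
  (pi_norm_le_iff_of_nonneg (Finset.sum_nonneg fun i _ => abs_nonneg (x i))).mpr fun i =>
    Finset.single_le_sum (f := fun i => |x i|) (fun j _ => abs_nonneg (x j)) (Finset.mem_univ i)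

theorem sum_sum_ite_eq [DecidableEq κ] (J : ι → κ) (x : ι → ℝ) :
    ∑ j, ∑ i, (if J i = j then x i else 0) = ∑ i, x i := by
  rw [Finset.sum_comm]
  simp

theorem sum_abs_sum_ite_le [DecidableEq κ] (J : ι → κ) (x : ι → ℝ) :
    ∑ j, |∑ i, if J i = j then x i else 0| ≤ ∑ i, |x i| :=
  calc ∑ j, |∑ i, if J i = j then x i else 0|
      ≤ ∑ j, ∑ i, (if J i = j then |x i| else 0) :=
        Finset.sum_le_sum fun j _ => (Finset.abs_sum_le_sum_abs _ _).trans_eq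
          (Finset.sum_congr rfl fun i _ => by split_ifs <;> simp)
    _ = ∑ i, |x i| := sum_sum_ite_eq J _

theorem relocate_mem_simplex {S : ℕ} (J : Fin S → Fin S) {m : Fin S → ℝ} (hm : m ∈ simplex S) :
    (fun j => ∑ i, if J i = j then m i else 0) ∈ simplex S :=
  ⟨fun j => Finset.sum_nonneg fun i _ => by split_ifs <;> simp [hm.1 i],
    show ∑ j, ∑ i, (if J i = j then m i else 0) = 1 from (sum_sum_ite_eq J m).trans hm.2⟩

theorem sum_abs_vecMul_le {M : ι → ι → ℝ} {C : ℝ} (hM : ∀ j, ∑ i, |M j i| ≤ C) (x : ι → ℝ) :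
    ∑ i, |∑ j, x j * M j i| ≤ C * ∑ j, |x j| :=
  calc ∑ i, |∑ j, x j * M j i| ≤ ∑ i, ∑ j, |x j| * |M j i| :=
        Finset.sum_le_sum fun i _ => (Finset.abs_sum_le_sum_abs _ _).trans_eq (by simp [abs_mul])
    _ = ∑ j, |x j| * ∑ i, |M j i| := by rw [Finset.sum_comm]; simp [Finset.mul_sum]
    _ ≤ ∑ j, |x j| * C := Finset.sum_le_sum fun j _ => by gcongr; exact hM j
    _ = C * ∑ j, |x j| := by rw [← Finset.sum_mul, mul_comm]

theorem sum_flux_into_negative_nonneg {Q : ι → ι → ℝ} (hoff : ∀ i j, i ≠ j → 0 ≤ Q i j)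
    (hrow : ∀ i, ∑ j, Q i j = 0) (m : ι → ℝ) :
    0 ≤ ∑ i with m i < 0, ∑ j, m j * Q j i := by
  set N := Finset.univ.filter fun i => m i < 0
  rw [Finset.sum_comm]
  refine Finset.sum_nonneg fun j _ => ?_
  rw [← Finset.mul_sum]
  by_cases hj : j ∈ N
  · have hout : 0 ≤ ∑ i ∈ Nᶜ, Q j i :=
      Finset.sum_nonneg fun i hi => hoff j i fun h => Finset.mem_compl.mp hi (h ▸ hj)
    have hin : ∑ i ∈ N, Q j i ≤ 0 := by
      linarith [Finset.sum_add_sum_compl N (Q j), hrow j]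
    exact mul_nonneg_of_nonpos_of_nonpos (Finset.mem_filter.mp hj).2.le hin
  · exact mul_nonneg (not_lt.mp fun h => hj (Finset.mem_filter.mpr ⟨Finset.mem_univ j, h⟩))
      (Finset.sum_nonneg fun i hi => hoff j i fun h => hj (h ▸ hi))

theorem sum_flux_eq_zero {Q : ι → ι → ℝ} (hrow : ∀ i, ∑ j, Q i j = 0) (m : ι → ℝ) :
    ∑ i, ∑ j, m j * Q j i = 0 := by
  rw [Finset.sum_comm]
  simp [← Finset.mul_sum, hrow]

end FiniteSums

section ShockVectors

variable {n : ℕ} {T : ℝ} {u : Fin n → ℝ}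

theorem Zu_le (u : Fin n → ℝ) : Zu u ≤ n :=
  (Finset.card_filter_le _ _).trans_eq (Finset.card_fin n)

theorem Zu_eq_of_shape {k : ℕ} (hk : k ≤ n) (hpos : ∀ i : Fin n, (i : ℕ) < k → u i ∈ Icc 0 T)
    (hneg : ∀ i : Fin n, k ≤ (i : ℕ) → u i = -1) : Zu u = k := by
  have hfilter : (Finset.univ.filter fun i : Fin n => u i ≠ -1) =
      ({i : Fin n | (i : ℕ) < k} : Finset (Fin n)) := by
    ext i
    simp only [Finset.mem_filter, Finset.mem_univ, true_and]
    refine ⟨fun hi => not_le.mp fun hki => hi (hneg i hki), fun hik hi => ?_⟩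
    linarith [(hpos i hik).1]
  rw [Zu, hfilter, Fin.card_filter_val_lt, min_eq_right hk]

theorem memU_spec (h : memU n T u) :
    (∀ i : Fin n, (i : ℕ) < Zu u → u i ∈ Icc 0 T) ∧
    (∀ i j : Fin n, (j : ℕ) < Zu u → i ≤ j → u i ≤ u j) ∧
    (∀ i : Fin n, Zu u ≤ (i : ℕ) → u i = -1) := by
  obtain ⟨k, hk, hpos, hmono, hneg⟩ := h
  rw [Zu_eq_of_shape hk hpos hneg]
  exact ⟨hpos, hmono, hneg⟩

theorem eq_neg_one_of_Zu_eq_zero (h : memU n T u) (hZ : Zu u = 0) : u = fun _ => -1 :=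
  funext fun i => (memU_spec h).2.2 i (by omega)

theorem lastTime_eq (hZ : 1 ≤ Zu u) :
    ∃ hlt : Zu u - 1 < n, lastTime u = u ⟨Zu u - 1, hlt⟩ := by
  have hlt : Zu u - 1 < n := by have := Zu_le u; omega
  exact ⟨hlt, dif_pos hlt⟩

theorem startTime_eq_lastTime (hZ : 1 ≤ Zu u) : startTime u = lastTime u :=
  if_neg (by omega)

theorem lastTime_mem_Icc (h : memU n T u) (hZ : 1 ≤ Zu u) : lastTime u ∈ Icc 0 T := by
  obtain ⟨hlt, heq⟩ := lastTime_eq hZ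
  rw [heq]
  exact (memU_spec h).1 _ (by simp only; omega)

theorem coord_le_lastTime (h : memU n T u) (hZ : 1 ≤ Zu u) (i : Fin n) : u i ≤ lastTime u := by
  obtain ⟨hpos, hmono, hneg⟩ := memU_spec h
  obtain ⟨hlt, heq⟩ := lastTime_eq hZ
  by_cases hi : (i : ℕ) < Zu u
  · rw [heq]
    exact hmono i _ (by simp only; omega) (Fin.le_def.mpr (by simp only; omega))
  · rw [hneg i (not_lt.mp hi)]
    linarith [(lastTime_mem_Icc h hZ).1]

theorem startTime_nonneg (h : memU n T u) : 0 ≤ startTime u := by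
  by_cases hZ : Zu u = 0
  · rw [startTime, if_pos hZ]
  · rw [startTime_eq_lastTime (by omega)]
    exact (lastTime_mem_Icc h (by omega)).1

theorem coord_le_startTime (h : memU n T u) (i : Fin n) : u i ≤ startTime u := by
  by_cases hZ : Zu u = 0
  · rw [(memU_spec h).2.2 i (by omega), startTime, if_pos hZ]
    norm_num
  · rw [startTime_eq_lastTime (by omega)]
    exact coord_le_lastTime h (by omega) i

theorem memTS_of_startTime_le (h : memU n T u) {s : ℝ} (hs : startTime u ≤ s) (hsT : s ≤ T) :
    memTS n T s u :=
  ⟨h, ⟨(startTime_nonneg h).trans hs, hsT⟩, fun i => (coord_le_startTime h i).trans hs⟩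

theorem startTime_le_of_memTS {t : ℝ} (h : memTS n T t u) : startTime u ≤ t := by
  by_cases hZ : Zu u = 0
  · rw [startTime, if_pos hZ]
    exact h.2.1.1
  · rw [startTime_eq_lastTime (by omega)]
    obtain ⟨hlt, heq⟩ := lastTime_eq (by omega : 1 ≤ Zu u)
    rw [heq]
    exact h.2.2 _

theorem startTime_neg_one : startTime (fun _ : Fin n => (-1 : ℝ)) = 0 := by
  simp [startTime, Zu]

theorem memTS_zero (hT : 0 ≤ T) : memTS n T 0 (fun _ => -1) :=
  ⟨⟨0, Nat.zero_le n, fun i hi => absurd hi (Nat.not_lt_zero _), fun i j hj => absurd hj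
    (Nat.not_lt_zero _), fun _ _ => rfl⟩, ⟨le_rfl, hT⟩, fun _ => by norm_num⟩

theorem pop_shape (h : memU n T u) (hZ : 1 ≤ Zu u) :
    (∀ i : Fin n, (i : ℕ) < Zu u - 1 → pop u i ∈ Icc 0 T) ∧
    (∀ i j : Fin n, (j : ℕ) < Zu u - 1 → i ≤ j → pop u i ≤ pop u j) ∧
    (∀ i : Fin n, Zu u - 1 ≤ (i : ℕ) → pop u i = -1) := by
  obtain ⟨hpos, hmono, hneg⟩ := memU_spec h
  refine ⟨fun i hi => ?_, fun i j hj hij => ?_, fun i hi => ?_⟩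
  · rw [pop, if_neg (by omega)]
    exact hpos i (by omega)
  · have hij' : (i : ℕ) ≤ j := hij
    rw [pop, pop, if_neg (by omega), if_neg (by omega)]
    exact hmono i j (by omega) hij
  · rw [pop]
    split_ifs with hc
    · rfl
    · exact hneg i (by omega)

theorem memU_pop (h : memU n T u) (hZ : 1 ≤ Zu u) : memU n T (pop u) :=
  ⟨Zu u - 1, by have := Zu_le u; omega, pop_shape h hZ⟩

theorem Zu_pop (h : memU n T u) (hZ : 1 ≤ Zu u) : Zu (pop u) = Zu u - 1 :=
  Zu_eq_of_shape (by have := Zu_le u; omega) (pop_shape h hZ).1 (pop_shape h hZ).2.2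

theorem memTS_lastTime_pop (h : memU n T u) (hZ : 1 ≤ Zu u) :
    memTS n T (lastTime u) (pop u) := by
  refine ⟨memU_pop h hZ, lastTime_mem_Icc h hZ, fun i => ?_⟩
  rw [pop]
  split_ifs
  · linarith [(lastTime_mem_Icc h hZ).1]
  · exact coord_le_lastTime h hZ i

theorem memU_induction {P : (Fin n → ℝ) → Prop} (h0 : P fun _ => -1)
    (hpop : ∀ u, memU n T u → 1 ≤ Zu u → P (pop u) → P u) : ∀ u, memU n T u → P u := by
  suffices ∀ k u, memU n T u → Zu u = k → P u from fun u hu => this _ u hu rfl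
  intro k
  induction k with
  | zero => exact fun u hu hZ => eq_neg_one_of_Zu_eq_zero hu hZ ▸ h0
  | succ k ih =>
    intro u hu hZ
    have hZpop : Zu (pop u) = k := by rw [Zu_pop hu (by omega), hZ]; rfl
    exact hpop u hu (by omega) (ih _ (memU_pop hu (by omega)) hZpop)

end ShockVectors

theorem norm_le_supTS {S n : ℕ} {T M : ℝ} {f : ℝ → (Fin n → ℝ) → Fin S → ℝ}
    (hM : ∀ t u, memTS n T t u → ‖f t u‖ ≤ M) {t : ℝ} {u : Fin n → ℝ} (htu : memTS n T t u) :
    ‖f t u‖ ≤ supTS S n T f :=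
  le_csSup ⟨M, fun _ ⟨t, u, htu, hr⟩ => hr ▸ hM t u htu⟩ ⟨t, u, htu, rfl⟩

section Forward

variable {S n : ℕ} {T : ℝ} {D : Model S n} {Lpsi LQ LPsi Llam Psimax psimax Qmax lammax : ℝ}
  {Jmax : ℕ}

theorem Hyps.Qmax_nonneg (H : Hyps S n T D Lpsi LQ LPsi Llam Psimax psimax Qmax lammax Jmax) :
    0 ≤ Qmax :=
  (Finset.sum_nonneg fun _ _ => abs_nonneg _).trans
    (H.Q_bdd 0 _ D.m0 0 (memTS_zero H.hT.le) H.hm0 ⟨0, H.hS⟩)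

theorem Hyps.sum_abs_flux_sub_le
    (H : Hyps S n T D Lpsi LQ LPsi Llam Psimax psimax Qmax lammax Jmax) {t : ℝ}
    {u : Fin n → ℝ} (htu : memTS n T t u) {m m' : Fin S → ℝ} (hm : m ∈ simplex S)
    (hm' : m' ∈ simplex S) (w w' : Fin S → ℝ) :
    ∑ i, |∑ j, m j * D.Q t u m w j i - ∑ j, m' j * D.Q t u m' w' j i| ≤
      (Qmax + LQ) * ∑ j, |m j - m' j| + LQ * ‖w - w'‖ := by
  have hsplit : ∀ i, ∑ j, m j * D.Q t u m w j i - ∑ j, m' j * D.Q t u m' w' j i =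
      ∑ j, (m j - m' j) * D.Q t u m w j i + ∑ j, m' j * (D.Q t u m w j i - D.Q t u m' w' j i) :=
    fun i => by
      rw [← Finset.sum_sub_distrib, ← Finset.sum_add_distrib]
      exact Finset.sum_congr rfl fun j _ => by ring
  have hm'_l1 : ∑ j, |m' j| = 1 := by
    rw [← hm'.2]
    exact Finset.sum_congr rfl fun j _ => abs_of_nonneg (hm'.1 j)
  have hnorm : ‖m - m'‖ ≤ ∑ j, |m j - m' j| := norm_le_sum_abs (m - m')
  calc _ ≤ ∑ i, (|∑ j, (m j - m' j) * D.Q t u m w j i| +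
        |∑ j, m' j * (D.Q t u m w j i - D.Q t u m' w' j i)|) :=
        Finset.sum_le_sum fun i _ => (hsplit i).symm ▸ abs_add_le _ _
    _ ≤ Qmax * ∑ j, |m j - m' j| + LQ * (‖m - m'‖ + ‖w - w'‖) * ∑ j, |m' j| := by
        rw [Finset.sum_add_distrib]
        exact add_le_add (sum_abs_vecMul_le (fun j => H.Q_bdd t u m w htu hm j) _)
          (sum_abs_vecMul_le (fun j => H.Q_lip t u htu m hm m' hm' w w' j) _)
    _ ≤ _ := by
        rw [hm'_l1]
        linarith [mul_le_mul_of_nonneg_left hnorm H.hLQ.le]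

theorem Hyps.mem_simplex_of_startTime
    (H : Hyps S n T D Lpsi LQ LPsi Llam Psimax psimax Qmax lammax Jmax)
    {v μ : ℝ → (Fin n → ℝ) → Fin S → ℝ} (hμ : SolForward S n T D v μ) {u : Fin n → ℝ}
    (hu : memU n T u) (hstart : μ (startTime u) u ∈ simplex S) {t : ℝ} (ht : memTS n T t u) :
    μ t u ∈ simplex S := by
  set a := startTime u
  have hat : a ≤ t := startTime_le_of_memTS ht
  have hE2 : ∀ s ∈ Icc a t, ∀ i, IntervalIntegrable (E2rhs D v μ u i) volume a s ∧
      μ s u i = μ a u i + ∫ x in a..s, E2rhs D v μ u i x := fun s hs =>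
    hμ.2.2 u hu s (memTS_of_startTime_le hu hs.1 (hs.2.trans ht.2.1.2))
  have hE2t := hE2 t (right_mem_Icc.mpr hat)
  refine ⟨nonneg_of_sum_rate_over_negative_nonneg hat (fun i => (hE2t i).1)
      (fun s hs i => (hE2 s hs i).2) hstart.1
      (fun s _ => sum_flux_into_negative_nonneg (H.Q_offdiag s u _ _) (H.Q_rowsum s u _ _) _),
    ?_⟩
  have hflux : ∑ i, ∫ x in a..t, E2rhs D v μ u i x = 0 := by
    rw [← intervalIntegral.integral_finsetSum fun i _ => (hE2t i).1]
    simp [E2rhs, sum_flux_eq_zero (H.Q_rowsum _ u _ _)]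
  rw [← hstart.2, Finset.sum_congr rfl fun i _ => (hE2t i).2, Finset.sum_add_distrib, hflux,
    add_zero]

theorem Hyps.forward_mem_simplex
    (H : Hyps S n T D Lpsi LQ LPsi Llam Psimax psimax Qmax lammax Jmax)
    {v μ : ℝ → (Fin n → ℝ) → Fin S → ℝ} (hμ : SolForward S n T D v μ) :
    ∀ t u, memTS n T t u → μ t u ∈ simplex S := by
  suffices ∀ u, memU n T u → ∀ t, memTS n T t u → μ t u ∈ simplex S from
    fun t u htu => this u htu.1 t htu
  refine memU_induction (fun t ht => H.mem_simplex_of_startTime hμ ht.1 ?_ ht)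
    fun u hu hZ ih t ht => H.mem_simplex_of_startTime hμ hu ?_ ht
  · rw [startTime_neg_one, funext hμ.1]
    exact H.hm0
  · rw [startTime_eq_lastTime hZ, funext (hμ.2.1 u hu hZ)]
    exact relocate_mem_simplex _ (ih _ (memTS_lastTime_pop hu hZ))

theorem Hyps.sum_abs_sub_le_gronwall
    (H : Hyps S n T D Lpsi LQ LPsi Llam Psimax psimax Qmax lammax Jmax)
    {v v' μ μ' : ℝ → (Fin n → ℝ) → Fin S → ℝ} (hμ : SolForward S n T D v μ)
    (hμ' : SolForward S n T D v' μ') {u : Fin n → ℝ} (hu : memU n T u) {Δ : ℝ}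
    (hΔ : ∀ s, memTS n T s u → ‖v s u - v' s u‖ ≤ Δ) {t : ℝ} (ht : memTS n T t u) :
    ∑ i, |μ t u i - μ' t u i| ≤
      (∑ i, |μ (startTime u) u i - μ' (startTime u) u i| + LQ * Δ * (t - startTime u)) *
        Real.exp ((Qmax + LQ) * (t - startTime u)) := by
  set a := startTime u
  have hat : a ≤ t := startTime_le_of_memTS ht
  have hmem : ∀ s ∈ Icc a t, memTS n T s u := fun s hs =>
    memTS_of_startTime_le hu hs.1 (hs.2.trans ht.2.1.2)
  set r : ℝ → ℝ := fun x => ∑ i, |E2rhs D v μ u i x - E2rhs D v' μ' u i x|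
  have hdist : ∀ s ∈ Icc a t, ∑ i, |μ s u i - μ' s u i| ≤
      ∑ i, |μ a u i - μ' a u i| + ∫ x in a..s, r x := fun s hs =>
    sum_abs_sub_le_add_integral (f := fun x => μ x u) (g := fun x => μ' x u) hs.1
      (fun i => (hμ.2.2 u hu s (hmem s hs) i).1) (fun i => (hμ'.2.2 u hu s (hmem s hs) i).1)
      (fun i => (hμ.2.2 u hu s (hmem s hs) i).2) (fun i => (hμ'.2.2 u hu s (hmem s hs) i).2)
  have hrate : ∀ s ∈ Icc a t, r s ≤ (Qmax + LQ) * ∑ i, |μ s u i - μ' s u i| + LQ * Δ :=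
    fun s hs => (H.sum_abs_flux_sub_le (hmem s hs) (H.forward_mem_simplex hμ s u (hmem s hs))
      (H.forward_mem_simplex hμ' s u (hmem s hs)) (v s u) (v' s u)).trans
        (add_le_add le_rfl (mul_le_mul_of_nonneg_left (hΔ s (hmem s hs)) H.hLQ.le))
  have hr : IntervalIntegrable r volume a t := by
    simpa [r, Finset.sum_fn] using IntervalIntegrable.sum Finset.univ fun i _ =>
      ((hμ.2.2 u hu t ht i).1.sub (hμ'.2.2 u hu t ht i).1).abs
  have hA : 0 ≤ Qmax + LQ := add_nonneg H.Qmax_nonneg H.hLQ.le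
  have hB : 0 ≤ LQ * Δ := mul_nonneg H.hLQ.le ((norm_nonneg _).trans (hΔ t ht))
  refine (hdist t (right_mem_Icc.mpr hat)).trans
    (add_integral_le_gronwall hat hA hB hr fun s hs => (hrate s hs).trans ?_)
  gcongr
  exact hdist s hs

theorem Hyps.forward_sum_abs_sub_le
    (H : Hyps S n T D Lpsi LQ LPsi Llam Psimax psimax Qmax lammax Jmax)
    {v v' μ μ' : ℝ → (Fin n → ℝ) → Fin S → ℝ} (hμ : SolForward S n T D v μ)
    (hμ' : SolForward S n T D v' μ') {Δ : ℝ}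
    (hΔ : ∀ s w, memTS n T s w → ‖v s w - v' s w‖ ≤ Δ) :
    ∀ t u, memTS n T t u →
      ∑ i, |μ t u i - μ' t u i| ≤ LQ * Δ * (t * Real.exp ((Qmax + LQ) * t)) := by
  suffices ∀ u, memU n T u → ∀ t, memTS n T t u →
      ∑ i, |μ t u i - μ' t u i| ≤ LQ * Δ * (t * Real.exp ((Qmax + LQ) * t)) from
    fun t u htu => this u htu.1 t htu
  have hA : 0 ≤ Qmax + LQ := add_nonneg H.Qmax_nonneg H.hLQ.le
  have hB : 0 ≤ LQ * Δ := mul_nonneg H.hLQ.le ((norm_nonneg _).trans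
    (hΔ 0 _ (memTS_zero (n := n) H.hT.le)))
  have hstep : ∀ u, memU n T u →
      ∑ i, |μ (startTime u) u i - μ' (startTime u) u i| ≤
        LQ * Δ * (startTime u * Real.exp ((Qmax + LQ) * startTime u)) →
      ∀ t, memTS n T t u →
        ∑ i, |μ t u i - μ' t u i| ≤ LQ * Δ * (t * Real.exp ((Qmax + LQ) * t)) :=
    fun u hu hstart t ht =>
      (H.sum_abs_sub_le_gronwall hμ hμ' hu (hΔ · u) ht).trans
        (add_mul_exp_le_mul_exp hA hB (startTime_nonneg hu) (startTime_le_of_memTS ht) hstart)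
  refine memU_induction (hstep _ (memTS_zero H.hT.le).1 ?_) fun u hu hZ ih => hstep u hu ?_
  · simp [startTime_neg_one, hμ.1, hμ'.1]
  · rw [startTime_eq_lastTime hZ]
    refine le_trans (le_of_eq (Finset.sum_congr rfl fun j _ => ?_))
      ((sum_abs_sum_ite_le (D.J (lastTime u)) _).trans (ih _ (memTS_lastTime_pop hu hZ)))
    rw [hμ.2.1 u hu hZ, hμ'.2.1 u hu hZ, ← Finset.sum_sub_distrib]
    congr 1
    exact Finset.sum_congr rfl fun i _ => by split_ifs <;> simp

end Forward

theorem forward_lipschitz_refined_general (S n : ℕ) (T : ℝ) (D : Model S n)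
    (Lpsi LQ LPsi Llam Psimax psimax Qmax lammax : ℝ) (Jmax : ℕ)
    (H : Hyps S n T D Lpsi LQ LPsi Llam Psimax psimax Qmax lammax Jmax)
    (v v' : ℝ → (Fin n → ℝ) → Fin S → ℝ)
    (hv : MemV S n T (vmaxC n T Psimax psimax Qmax lammax) v)
    (hv' : MemV S n T (vmaxC n T Psimax psimax Qmax lammax) v')
    (μ μ' : ℝ → (Fin n → ℝ) → Fin S → ℝ)
    (hμ : SolForward S n T D v μ)
    (hμ' : SolForward S n T D v' μ') :
    ∀ t u, memTS n T t u →
      ‖μ t u - μ' t u‖ ≤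
        LQ * T * (∑ i ∈ Finset.range (Zu u + 1),
            (Real.exp ((Qmax + LQ) * T)) ^ (i + 1) * (Jmax : ℝ) ^ i) *
          supTS S n T (fun t u => v t u - v' t u) := by
  intro t u ht
  set Δ := supTS S n T (fun t u => v t u - v' t u)
  have hΔ : ∀ s w, memTS n T s w → ‖v s w - v' s w‖ ≤ Δ := fun s w hsw =>
    norm_le_supTS (M := 2 * vmaxC n T Psimax psimax Qmax lammax)
      (fun s w hsw => (norm_sub_le _ _).trans (by linarith [hv.2 s w hsw, hv'.2 s w hsw])) hsw
  have hΔ0 : 0 ≤ Δ := (norm_nonneg _).trans (hΔ t u ht)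
  have hgrowth : t * Real.exp ((Qmax + LQ) * t) ≤ T * Real.exp ((Qmax + LQ) * T) :=
    mul_le_mul ht.2.1.2 (Real.exp_le_exp.mpr (mul_le_mul_of_nonneg_left ht.2.1.2
      (add_nonneg H.Qmax_nonneg H.hLQ.le))) (Real.exp_pos _).le H.hT.le
  have hfirst : Real.exp ((Qmax + LQ) * T) ≤ ∑ i ∈ Finset.range (Zu u + 1),
      (Real.exp ((Qmax + LQ) * T)) ^ (i + 1) * (Jmax : ℝ) ^ i := by
    have hterm := Finset.single_le_sum (f := fun i => Real.exp ((Qmax + LQ) * T) ^ (i + 1) *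
      (Jmax : ℝ) ^ i) (fun i _ => by positivity) (by simp : 0 ∈ Finset.range (Zu u + 1))
    simpa using hterm
  calc ‖μ t u - μ' t u‖ ≤ ∑ i, |μ t u i - μ' t u i| := norm_le_sum_abs _
    _ ≤ LQ * Δ * (t * Real.exp ((Qmax + LQ) * t)) := H.forward_sum_abs_sub_le hμ hμ' hΔ t u ht
    _ ≤ LQ * Δ * (T * Real.exp ((Qmax + LQ) * T)) :=
        mul_le_mul_of_nonneg_left hgrowth (mul_nonneg H.hLQ.le hΔ0)
    _ = LQ * T * Real.exp ((Qmax + LQ) * T) * Δ := by ring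
    _ ≤ _ := mul_le_mul_of_nonneg_right
        (mul_le_mul_of_nonneg_left hfirst (mul_nonneg H.hLQ.le H.hT.le)) hΔ0

/-- **Refined forward Lipschitz estimate depending on the number of shocks**
(inside Lemma B.5). If `v, v̄ ∈ V` and `μ, μ̄` are the unique solutions of (E2), (E4),
(E5) given `v` and `v̄` respectively, then for every `(t,u) ∈ TS`,
`‖μ(t,u) − μ̄(t,u)‖ ≤ L_Q̂ T (Σ_{i=0}^{Z(u)} (e^{(Qmax+L_Q̂)T})^{i+1} Jmax^i)
  sup_{TS} ‖v − v̄‖`. -/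
theorem forward_lipschitz_refined (S n : ℕ) (T : ℝ) (D : Model S n)
    (Lpsi LQ LPsi Llam Psimax psimax Qmax lammax : ℝ) (Jmax : ℕ)
    (H : Hyps S n T D Lpsi LQ LPsi Llam Psimax psimax Qmax lammax Jmax)
    (v v' : ℝ → (Fin n → ℝ) → Fin S → ℝ)
    (hv : MemV S n T (vmaxC n T Psimax psimax Qmax lammax) v)
    (hv' : MemV S n T (vmaxC n T Psimax psimax Qmax lammax) v')
    (μ μ' : ℝ → (Fin n → ℝ) → Fin S → ℝ)
    (hμreg : Regular S n T μ) (hμ : SolForward S n T D v μ)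
    (hμ'reg : Regular S n T μ') (hμ' : SolForward S n T D v' μ') :
    ∀ t u, memTS n T t u →
      ‖μ t u - μ' t u‖ ≤
        LQ * T * (∑ i ∈ Finset.range (Zu u + 1),
            (Real.exp ((Qmax + LQ) * T)) ^ (i + 1) * (Jmax : ℝ) ^ i) *
          supTS S n T (fun t u => v t u - v' t u) :=
  forward_lipschitz_refined_general S n T D Lpsi LQ LPsi Llam Psimax psimax Qmax lammax Jmax H v v'
    hv hv' μ μ' hμ hμ'

end MFGShocks
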